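/- (No marginally trapped meridian surfaces of parabolic type with κ̄ ≡ 0.) Assume moreover f' > 0 (hence g' < 0) on I, and suppose κ̄(v) = 0 for all v ∈ J, i.e. φφ̈ − 2φ̇² − φ² = 0 on J. Then at every (u,v) ∈ I × J the mean curvature vector satisfies ⟨H(u,v),H(u,v)⟩ ≤ 0, with equality if and only if H(u,v) = 0. Consequently there is no marginally trapped meridian surface of parabolic type with κ̄ ≡ 0 and nonvanishing mean curvature vector. -/

import Mathlib

namespace MeridianParabolic

noncomputable section

/-- The Minkowski inner product of signature (3,1) on `ℝ⁴`:
`⟨x,y⟩ = x₁y₁ + x₂y₂ + x₃y₃ − x₄y₄`. -/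
def mink (x y : Fin 4 → ℝ) : ℝ := x 0 * y 0 + x 1 * y 1 + x 2 * y 2 - x 3 * y 3

/-- The first standard basis vector `e₁`. -/
def e1 : Fin 4 → ℝ := ![1, 0, 0, 0]

/-- The second standard basis vector `e₂`. -/
def e2 : Fin 4 → ℝ := ![0, 1, 0, 0]

/-- The lightlike vector `ξ₁ = (e₃ + e₄)/√2`. -/
def xi1 : Fin 4 → ℝ := ![0, 0, 1 / Real.sqrt 2, 1 / Real.sqrt 2]

/-- The lightlike vector `ξ₂ = (−e₃ + e₄)/√2`. -/
def xi2 : Fin 4 → ℝ := ![0, 0, -(1 / Real.sqrt 2), 1 / Real.sqrt 2]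

/-- The meridian surface of parabolic type
`z(u,v) = fφ cos v · e₁ + fφ sin v · e₂ + (fφ²/2 + g) ξ₁ + f ξ₂`. -/
def z (f g φ : ℝ → ℝ) (u v : ℝ) : Fin 4 → ℝ :=
  (f u * φ v * Real.cos v) • e1 + (f u * φ v * Real.sin v) • e2 +
    (f u * (φ v) ^ 2 / 2 + g u) • xi1 + f u • xi2

/-- The partial derivative `z_u`. -/
def zu (f g φ : ℝ → ℝ) (u v : ℝ) : Fin 4 → ℝ := deriv (fun t => z f g φ t v) u

/-- The partial derivative `z_v`. -/
def zv (f g φ : ℝ → ℝ) (u v : ℝ) : Fin 4 → ℝ := deriv (fun t => z f g φ u t) v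

/-- The second partial derivative `z_uu`. -/
def zuu (f g φ : ℝ → ℝ) (u v : ℝ) : Fin 4 → ℝ := deriv (fun t => zu f g φ t v) u

/-- The second partial derivative `z_uv`. -/
def zuv (f g φ : ℝ → ℝ) (u v : ℝ) : Fin 4 → ℝ := deriv (fun t => zu f g φ u t) v

/-- The second partial derivative `z_vv`. -/
def zvv (f g φ : ℝ → ℝ) (u v : ℝ) : Fin 4 → ℝ := deriv (fun t => zv f g φ u t) v

/-- The normal field `n₁ = ((φ̇ sin v + φ cos v) e₁ + (−φ̇ cos v + φ sin v) e₂ + φ² ξ₁)/√(φ̇² + φ²)`. -/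
def n1 (φ : ℝ → ℝ) (v : ℝ) : Fin 4 → ℝ :=
  (Real.sqrt ((deriv φ v) ^ 2 + (φ v) ^ 2))⁻¹ •
    ((deriv φ v * Real.sin v + φ v * Real.cos v) • e1 +
      (-(deriv φ v) * Real.cos v + φ v * Real.sin v) • e2 + (φ v) ^ 2 • xi1)

/-- The normal field `n₂ = √(−f'/(2g')) (φ cos v e₁ + φ sin v e₂ + ((f'φ² − 2g')/(2f')) ξ₁ + ξ₂)`. -/
def n2 (f g φ : ℝ → ℝ) (u v : ℝ) : Fin 4 → ℝ :=
  Real.sqrt (-(deriv f u) / (2 * deriv g u)) •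
    ((φ v * Real.cos v) • e1 + (φ v * Real.sin v) • e2 +
      ((deriv f u * (φ v) ^ 2 - 2 * deriv g u) / (2 * deriv f u)) • xi1 + xi2)

/-- The mean curvature vector
`H = (1/2)(⟨z_uu,n₁⟩/E + ⟨z_vv,n₁⟩/G) n₁ − (1/2)(⟨z_uu,n₂⟩/E + ⟨z_vv,n₂⟩/G) n₂`,
where `E = ⟨z_u,z_u⟩` and `G = ⟨z_v,z_v⟩`. -/
def Hvec (f g φ : ℝ → ℝ) (u v : ℝ) : Fin 4 → ℝ :=
  (1 / 2 * (mink (zuu f g φ u v) (n1 φ v) / mink (zu f g φ u v) (zu f g φ u v) +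
      mink (zvv f g φ u v) (n1 φ v) / mink (zv f g φ u v) (zv f g φ u v))) • n1 φ v -
  (1 / 2 * (mink (zuu f g φ u v) (n2 f g φ u v) / mink (zu f g φ u v) (zu f g φ u v) +
      mink (zvv f g φ u v) (n2 f g φ u v) / mink (zv f g φ u v) (zv f g φ u v))) • n2 f g φ u v

/-! Write the surface as `z = f • l + g • ξ₁` and compute in the null frame `(e₁, e₂, ξ₁, ξ₂)`.
Then `z_uu` is a combination of `l` and `ξ₁`, both orthogonal to `n₁`, while
`⟨z_vv, n₁⟩ = f (φφ̈ − 2φ̇² − φ²)/√(φ̇² + φ²)` vanishes when `κ̄ = 0`. So `H` is a multiple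
`-β n₂` of the timelike unit normal `n₂`, and `⟨H,H⟩ = -β²`. -/

open scoped Topology

def frameVec (a b c d : ℝ) : Fin 4 → ℝ := a • e1 + b • e2 + c • xi1 + d • xi2

theorem mink_frameVec (a b c d a' b' c' d' : ℝ) :
    mink (frameVec a b c d) (frameVec a' b' c' d') = a * a' + b * b' - c * d' - d * c' := by
  have h2 : Real.sqrt 2 ^ 2 = 2 := Real.sq_sqrt (by norm_num)
  simp only [mink, frameVec, e1, e2, xi1, xi2, Matrix.smul_cons, smul_eq_mul, mul_one, mul_zero,
    Matrix.smul_empty, Matrix.add_cons, Matrix.head_cons, add_zero, Matrix.tail_cons, zero_add,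
    Matrix.empty_add_empty, one_div, mul_neg, Pi.add_apply, Matrix.cons_val_zero,
    Matrix.cons_val_one, Matrix.cons_val]
  field_simp
  linear_combination (c * d' + d * c') * h2

theorem smul_frameVec (r a b c d : ℝ) :
    r • frameVec a b c d = frameVec (r * a) (r * b) (r * c) (r * d) := by
  simp only [frameVec, smul_add, smul_smul]

theorem frameVec_add (a b c d a' b' c' d' : ℝ) :
    frameVec a b c d + frameVec a' b' c' d' = frameVec (a + a') (b + b') (c + c') (d + d') := by
  simp only [frameVec, add_smul]
  abel

theorem hasDerivAt_frameVec {a b c d : ℝ → ℝ} {a' b' c' d' t : ℝ} (ha : HasDerivAt a a' t)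
    (hb : HasDerivAt b b' t) (hc : HasDerivAt c c' t) (hd : HasDerivAt d d' t) :
    HasDerivAt (fun s => frameVec (a s) (b s) (c s) (d s)) (frameVec a' b' c' d') t :=
  (((ha.smul_const e1).add (hb.smul_const e2)).add (hc.smul_const xi1)).add (hd.smul_const xi2)

theorem mink_smul_left (r : ℝ) (x y : Fin 4 → ℝ) : mink (r • x) y = r * mink x y := by
  simp only [mink, Pi.smul_apply, smul_eq_mul]
  ring

theorem mink_smul_right (r : ℝ) (x y : Fin 4 → ℝ) : mink x (r • y) = r * mink x y := by
  simp only [mink, Pi.smul_apply, smul_eq_mul]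
  ring

theorem mink_add_left (x y w : Fin 4 → ℝ) : mink (x + y) w = mink x w + mink y w := by
  simp only [mink, Pi.add_apply]
  ring

theorem mink_smul_self_nonpos_and_eq_zero_iff {x : Fin 4 → ℝ} (hx : mink x x < 0) (r : ℝ) :
    mink (r • x) (r • x) ≤ 0 ∧ (mink (r • x) (r • x) = 0 ↔ r • x = 0) := by
  have hrx : mink (r • x) (r • x) = r ^ 2 * mink x x := by
    rw [mink_smul_left, mink_smul_right]
    ring
  refine ⟨hrx ▸ mul_nonpos_of_nonneg_of_nonpos (sq_nonneg r) hx.le, fun h => ?_, fun h => ?_⟩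
  · have hr : r = 0 := by
      rw [hrx] at h
      exact pow_eq_zero_iff two_ne_zero |>.mp ((mul_eq_zero.mp h).resolve_right hx.ne)
    rw [hr, zero_smul]
  · rw [h]
    simp [mink]

theorem n1_eq (φ : ℝ → ℝ) (v : ℝ) :
    n1 φ v = (Real.sqrt (deriv φ v ^ 2 + φ v ^ 2))⁻¹ •
      frameVec (deriv φ v * Real.sin v + φ v * Real.cos v)
        (-deriv φ v * Real.cos v + φ v * Real.sin v) (φ v ^ 2) 0 := by
  simp only [n1, frameVec, zero_smul, add_zero]

theorem n2_eq (f g φ : ℝ → ℝ) (u v : ℝ) :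
    n2 f g φ u v = Real.sqrt (-deriv f u / (2 * deriv g u)) •
      frameVec (φ v * Real.cos v) (φ v * Real.sin v)
        ((deriv f u * φ v ^ 2 - 2 * deriv g u) / (2 * deriv f u)) 1 := by
  simp only [n2, frameVec, one_smul]

theorem mink_n2_n2 {f g : ℝ → ℝ} {u : ℝ} (hfg : deriv f u * deriv g u < 0) (φ : ℝ → ℝ)
    (v : ℝ) : mink (n2 f g φ u v) (n2 f g φ u v) = -1 := by
  have hf : deriv f u ≠ 0 := left_ne_zero_of_mul hfg.ne
  have hg : deriv g u ≠ 0 := right_ne_zero_of_mul hfg.ne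
  have hsq : Real.sqrt (-deriv f u / (2 * deriv g u)) ^ 2 = -deriv f u / (2 * deriv g u) := by
    refine Real.sq_sqrt (div_nonneg_iff.mpr ?_)
    rcases lt_or_gt_of_ne hf with h | h
    · exact Or.inl ⟨by linarith, by nlinarith⟩
    · exact Or.inr ⟨by linarith, by nlinarith⟩
  rw [n2_eq, mink_smul_left, mink_smul_right, mink_frameVec, ← mul_assoc, ← sq, hsq]
  field_simp
  linear_combination (-2 * deriv f u * φ v ^ 2) * Real.sin_sq_add_cos_sq v

section Surface

variable (φ : ℝ → ℝ)

def l (v : ℝ) : Fin 4 → ℝ := frameVec (φ v * Real.cos v) (φ v * Real.sin v) (φ v ^ 2 / 2) 1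

theorem xi1_eq_frameVec : xi1 = frameVec 0 0 1 0 := by
  simp only [frameVec, zero_smul, one_smul, zero_add, add_zero]

theorem z_eq_smul_l_add (f g : ℝ → ℝ) (u v : ℝ) : z f g φ u v = f u • l φ v + g u • xi1 := by
  rw [l, xi1_eq_frameVec, smul_frameVec, smul_frameVec, frameVec_add]
  show frameVec _ _ _ _ = _
  congr 1 <;> ring

theorem mink_l_n1 (v : ℝ) : mink (l φ v) (n1 φ v) = 0 := by
  rw [l, n1_eq, mink_smul_right, mink_frameVec]
  linear_combination ((Real.sqrt (deriv φ v ^ 2 + φ v ^ 2))⁻¹ * φ v ^ 2) * Real.sin_sq_add_cos_sq v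

theorem mink_xi1_n1 (v : ℝ) : mink xi1 (n1 φ v) = 0 := by
  rw [xi1_eq_frameVec, n1_eq, mink_smul_right, mink_frameVec]
  ring

theorem hasDerivAt_l {v : ℝ} (hφ : DifferentiableAt ℝ φ v) :
    HasDerivAt (l φ) (frameVec (deriv φ v * Real.cos v - φ v * Real.sin v)
      (deriv φ v * Real.sin v + φ v * Real.cos v) (φ v * deriv φ v) 0) v := by
  show HasDerivAt (fun s => frameVec (φ s * Real.cos s) (φ s * Real.sin s) (φ s ^ 2 / 2) 1) _ v
  refine hasDerivAt_frameVec ?_ ?_ ?_ (hasDerivAt_const v 1)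
  · exact (hφ.hasDerivAt.fun_mul (Real.hasDerivAt_cos v)).congr_deriv (by ring)
  · exact hφ.hasDerivAt.fun_mul (Real.hasDerivAt_sin v)
  · exact ((hφ.hasDerivAt.fun_pow 2).div_const 2).congr_deriv (by ring)

theorem hasDerivAt_deriv_l {v : ℝ} (hφ : ∀ᶠ t in 𝓝 v, DifferentiableAt ℝ φ t)
    (hφ' : DifferentiableAt ℝ (deriv φ) v) :
    HasDerivAt (deriv (l φ))
      (frameVec (deriv (deriv φ) v * Real.cos v - 2 * deriv φ v * Real.sin v - φ v * Real.cos v)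
        (deriv (deriv φ) v * Real.sin v + 2 * deriv φ v * Real.cos v - φ v * Real.sin v)
        (deriv φ v ^ 2 + φ v * deriv (deriv φ) v) 0) v := by
  have hφv := hφ.self_of_nhds
  have heq : deriv (l φ) =ᶠ[𝓝 v] fun t => frameVec (deriv φ t * Real.cos t - φ t * Real.sin t)
      (deriv φ t * Real.sin t + φ t * Real.cos t) (φ t * deriv φ t) 0 :=
    hφ.mono fun t ht => (hasDerivAt_l φ ht).deriv
  refine (hasDerivAt_frameVec ?_ ?_ ?_ (hasDerivAt_const v 0)).congr_of_eventuallyEq heq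
  · exact ((hφ'.hasDerivAt.fun_mul (Real.hasDerivAt_cos v)).sub
      (hφv.hasDerivAt.fun_mul (Real.hasDerivAt_sin v))).congr_deriv (by ring)
  · exact ((hφ'.hasDerivAt.fun_mul (Real.hasDerivAt_sin v)).add
      (hφv.hasDerivAt.fun_mul (Real.hasDerivAt_cos v))).congr_deriv (by ring)
  · exact (hφv.hasDerivAt.fun_mul hφ'.hasDerivAt).congr_deriv (by ring)

theorem zu_eq {f g : ℝ → ℝ} {t : ℝ} (hf : DifferentiableAt ℝ f t) (hg : DifferentiableAt ℝ g t)
    (v : ℝ) : zu f g φ t v = deriv f t • l φ v + deriv g t • xi1 := by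
  simp only [zu, z_eq_smul_l_add]
  exact ((hf.hasDerivAt.smul_const _).add (hg.hasDerivAt.smul_const _)).deriv

theorem zuu_eq {f g : ℝ → ℝ} {u : ℝ} (hf : ∀ᶠ t in 𝓝 u, DifferentiableAt ℝ f t)
    (hg : ∀ᶠ t in 𝓝 u, DifferentiableAt ℝ g t) (hf' : DifferentiableAt ℝ (deriv f) u)
    (hg' : DifferentiableAt ℝ (deriv g) u) (v : ℝ) :
    zuu f g φ u v = deriv (deriv f) u • l φ v + deriv (deriv g) u • xi1 := by
  have heq : (fun t => zu f g φ t v) =ᶠ[𝓝 u] fun t => deriv f t • l φ v + deriv g t • xi1 :=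
    (hf.and hg).mono fun t ht => zu_eq φ ht.1 ht.2 v
  rw [zuu, heq.deriv_eq]
  exact ((hf'.hasDerivAt.smul_const _).add (hg'.hasDerivAt.smul_const _)).deriv

theorem zv_eq (f g : ℝ → ℝ) (u : ℝ) {t : ℝ} (hφ : DifferentiableAt ℝ φ t) :
    zv f g φ u t = f u • deriv (l φ) t := by
  simp only [zv, z_eq_smul_l_add]
  exact ((hasDerivAt_l φ hφ).differentiableAt.hasDerivAt.fun_const_smul (f u)).add_const _ |>.deriv

theorem mink_zuu_n1 {f g : ℝ → ℝ} {u : ℝ} (hf : ∀ᶠ t in 𝓝 u, DifferentiableAt ℝ f t)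
    (hg : ∀ᶠ t in 𝓝 u, DifferentiableAt ℝ g t) (hf' : DifferentiableAt ℝ (deriv f) u)
    (hg' : DifferentiableAt ℝ (deriv g) u) (v : ℝ) :
    mink (zuu f g φ u v) (n1 φ v) = 0 := by
  rw [zuu_eq φ hf hg hf' hg', mink_add_left, mink_smul_left, mink_smul_left, mink_l_n1,
    mink_xi1_n1, mul_zero, mul_zero, add_zero]

theorem mink_zvv_n1 (f g : ℝ → ℝ) (u : ℝ) {v : ℝ} (hφ : ∀ᶠ t in 𝓝 v, DifferentiableAt ℝ φ t)
    (hφ' : DifferentiableAt ℝ (deriv φ) v) :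
    mink (zvv f g φ u v) (n1 φ v) = f u *
      (φ v * deriv (deriv φ) v - 2 * deriv φ v ^ 2 - φ v ^ 2) /
        Real.sqrt (deriv φ v ^ 2 + φ v ^ 2) := by
  have heq : (fun t => zv f g φ u t) =ᶠ[𝓝 v] fun t => f u • deriv (l φ) t :=
    hφ.mono fun t ht => zv_eq φ f g u ht
  rw [zvv, heq.deriv_eq, ((hasDerivAt_deriv_l φ hφ hφ').fun_const_smul (f u)).deriv, n1_eq,
    mink_smul_left, mink_smul_right, mink_frameVec, div_eq_mul_inv]
  linear_combination (f u * (Real.sqrt (deriv φ v ^ 2 + φ v ^ 2))⁻¹ *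
    (φ v * deriv (deriv φ) v - 2 * deriv φ v ^ 2 - φ v ^ 2)) * Real.sin_sq_add_cos_sq v

end Surface

theorem eventually_differentiableAt_and_differentiableAt_deriv {f : ℝ → ℝ}
    {I : Set ℝ} (hI : IsOpen I) (hf : ContDiffOn ℝ 2 f I) {u : ℝ} (hu : u ∈ I) :
    (∀ᶠ t in 𝓝 u, DifferentiableAt ℝ f t) ∧ DifferentiableAt ℝ (deriv f) u :=
  ⟨Filter.eventually_of_mem (hI.mem_nhds hu) fun _ ht =>
      (hf.differentiableOn (by norm_num)).differentiableAt (hI.mem_nhds ht),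
    ((hf.deriv_of_isOpen hI (m := 1) (by norm_num)).differentiableOn one_ne_zero).differentiableAt
      (hI.mem_nhds hu)⟩

theorem statement18_general
    (I J : Set ℝ) (hIopen : IsOpen I)
    (hJopen : IsOpen J)
    (f g φ : ℝ → ℝ)
    (hf : ContDiffOn ℝ (⊤ : ℕ∞) f I) (hg : ContDiffOn ℝ (⊤ : ℕ∞) g I)
    (hφ : ContDiffOn ℝ (⊤ : ℕ∞) φ J)
    (hfg : ∀ u ∈ I, 0 < -(deriv f u * deriv g u))
    (hκ0 : ∀ v ∈ J,
      φ v * deriv (deriv φ) v - 2 * (deriv φ v) ^ 2 - (φ v) ^ 2 = 0) :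
    ∀ u ∈ I, ∀ v ∈ J,
      mink (Hvec f g φ u v) (Hvec f g φ u v) ≤ 0 ∧
      (mink (Hvec f g φ u v) (Hvec f g φ u v) = 0 ↔ Hvec f g φ u v = 0) := by
  intro u hu v hv
  have h2 : (2 : WithTop ℕ∞) ≤ (⊤ : ℕ∞) := WithTop.coe_le_coe.mpr le_top
  obtain ⟨hfu, hf'u⟩ :=
    eventually_differentiableAt_and_differentiableAt_deriv hIopen (hf.of_le h2) hu
  obtain ⟨hgu, hg'u⟩ :=
    eventually_differentiableAt_and_differentiableAt_deriv hIopen (hg.of_le h2) hu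
  obtain ⟨hφv, hφ'v⟩ :=
    eventually_differentiableAt_and_differentiableAt_deriv hJopen (hφ.of_le h2) hv
  have hH : Hvec f g φ u v = -(1 / 2 *
      (mink (zuu f g φ u v) (n2 f g φ u v) / mink (zu f g φ u v) (zu f g φ u v) +
        mink (zvv f g φ u v) (n2 f g φ u v) / mink (zv f g φ u v) (zv f g φ u v))) •
      n2 f g φ u v := by
    rw [Hvec, mink_zuu_n1 φ hfu hgu hf'u hg'u, mink_zvv_n1 φ f g u hφv hφ'v, hκ0 v hv]
    simp only [mul_zero, zero_div, add_zero, zero_smul, zero_sub, neg_smul]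
  rw [hH]
  exact mink_smul_self_nonpos_and_eq_zero_iff
    (by rw [mink_n2_n2 (neg_pos.mp (hfg u hu))]; norm_num) _

/-- no marginally trapped meridian surfaces of parabolic type with
`κ̄ ≡ 0`: assuming `f' > 0` (hence `g' < 0`) and `φφ̈ − 2φ̇² − φ² = 0` on `J`
(i.e. `κ̄ ≡ 0`), at every point `⟨H,H⟩ ≤ 0`, with equality if and only if `H = 0`;
consequently there is no marginally trapped meridian surface of parabolic type with
`κ̄ ≡ 0` and nonvanishing mean curvature vector. -/
theorem statement18
    (I J : Set ℝ) (hIopen : IsOpen I) (hIconn : IsPreconnected I)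
    (hJopen : IsOpen J) (hJconn : IsPreconnected J)
    (f g φ : ℝ → ℝ)
    (hf : ContDiffOn ℝ (⊤ : ℕ∞) f I) (hg : ContDiffOn ℝ (⊤ : ℕ∞) g I)
    (hφ : ContDiffOn ℝ (⊤ : ℕ∞) φ J)
    (hfpos : ∀ u ∈ I, 0 < f u)
    (hfg : ∀ u ∈ I, 0 < -(deriv f u * deriv g u))
    (hφpos : ∀ v ∈ J, 0 < (deriv φ v) ^ 2 + (φ v) ^ 2)
    (hfd : ∀ u ∈ I, 0 < deriv f u) (hgd : ∀ u ∈ I, deriv g u < 0)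
    (hκ0 : ∀ v ∈ J,
      φ v * deriv (deriv φ) v - 2 * (deriv φ v) ^ 2 - (φ v) ^ 2 = 0) :
    ∀ u ∈ I, ∀ v ∈ J,
      mink (Hvec f g φ u v) (Hvec f g φ u v) ≤ 0 ∧
      (mink (Hvec f g φ u v) (Hvec f g φ u v) = 0 ↔ Hvec f g φ u v = 0) :=
  statement18_general I J hIopen hJopen f g φ hf hg hφ hfg hκ0

end
end MeridianParabolic
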